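/- arXiv:1607.06837 — 2 statements merged into one kernel-verified Lean document; each statement's English description precedes it below -/
import Mathlib

section
/- For every real δ with 0 < δ < 1, every integer M ≥ 2, and every ε with 0 ≤ ε ≤ 1 - 1/M, the converse bound (1-ε)·ℓ*(M(1-ε))/(1-δ) is at least the Fano-type bound ((1-ε)log₂ M - h(ε))/(1-δ), where h is the binary entropy function and ℓ*(x) = ⌊log₂ x⌋ + 2(1 - 2^{⌊log₂ x⌋ - log₂ x}). -/
noncomputable def lstar (x : ℝ) : ℝ :=
  (⌊Real.logb 2 x⌋ : ℝ) + 2 * (1 - (2:ℝ) ^ ((⌊Real.logb 2 x⌋ : ℝ) - Real.logb 2 x))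

noncomputable def binEnt (ε : ℝ) : ℝ :=
  -ε * Real.logb 2 ε - (1 - ε) * Real.logb 2 (1 - ε)

lemma two_rpow_neg_le {t : ℝ} (h0 : 0 ≤ t) (h1 : t ≤ 1) : (2:ℝ) ^ (-t) ≤ 1 - t / 2 := by
  have hc := convexOn_exp.2 (Set.mem_univ (0:ℝ)) (Set.mem_univ (Real.log 2))
    h0 (by linarith : (0:ℝ) ≤ 1 - t) (by ring)
  simp only [smul_eq_mul, mul_zero, zero_add, Real.exp_zero, mul_one, Real.exp_log (by norm_num : (0:ℝ) < 2)] at hc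
  have he : (2:ℝ) ^ (1 - t) = Real.exp ((1 - t) * Real.log 2) := by
    rw [Real.rpow_def_of_pos (by norm_num)]; ring_nf
  have h2 : (2:ℝ) ^ (1 - t) ≤ 2 - t := by rw [he]; linarith
  have h3 : (2:ℝ) ^ (1 - t) = 2 * (2:ℝ) ^ (-t) := by
    rw [show (1:ℝ) - t = 1 + (-t) by ring, Real.rpow_add (by norm_num), Real.rpow_one]
  nlinarith [h3 ▸ h2]

lemma logb_le_lstar {x : ℝ} (hx : 1 ≤ x) : Real.logb 2 x ≤ lstar x := by
  set L := Real.logb 2 x with hL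
  have h0 : (⌊L⌋ : ℝ) ≤ L := Int.floor_le L
  have h1 : L - (⌊L⌋ : ℝ) < 1 := by
    have := Int.lt_floor_add_one L; linarith
  have key := two_rpow_neg_le (t := L - (⌊L⌋ : ℝ)) (by linarith) (le_of_lt h1)
  have : (2:ℝ) ^ ((⌊L⌋ : ℝ) - L) = (2:ℝ) ^ (-(L - (⌊L⌋:ℝ))) := by ring_nf
  unfold lstar
  rw [← hL, this]
  linarith

theorem stmt11 (δ ε : ℝ) (M : ℕ) (hδ0 : 0 < δ) (hδ1 : δ < 1) (hM : 2 ≤ M)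
    (hε0 : 0 ≤ ε) (hε1 : ε ≤ 1 - 1 / M) :
    ((1 - ε) * Real.logb 2 (M : ℝ) - binEnt ε) / (1 - δ)
      ≤ (1 - ε) * lstar ((M : ℝ) * (1 - ε)) / (1 - δ) := by
  have hMR : (2:ℝ) ≤ (M:ℝ) := by exact_mod_cast hM
  have hM0 : (0:ℝ) < M := by linarith
  have hp : 1 / (M:ℝ) ≤ 1 - ε := by linarith
  have hp0 : 0 < 1 - ε := lt_of_lt_of_le (by positivity) hp
  have hε1' : ε ≤ 1 := by linarith
  have hx1 : (1:ℝ) ≤ (M:ℝ) * (1 - ε) := by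
    have := (div_le_iff₀ hM0).mp hp
    linarith [mul_comm (1 - ε) (M:ℝ)]
  have hεlog : ε * Real.logb 2 ε ≤ 0 :=
    mul_nonpos_of_nonneg_of_nonpos hε0 (Real.logb_nonpos (by norm_num) hε0 hε1')
  have hsplit : Real.logb 2 ((M:ℝ) * (1 - ε)) = Real.logb 2 M + Real.logb 2 (1 - ε) :=
    Real.logb_mul (ne_of_gt hM0) (ne_of_gt hp0)
  have hmain : (1 - ε) * Real.logb 2 (M : ℝ) - binEnt ε
      ≤ (1 - ε) * lstar ((M : ℝ) * (1 - ε)) := by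
    have h1 : (1 - ε) * Real.logb 2 ((M:ℝ) * (1 - ε))
        ≤ (1 - ε) * lstar ((M : ℝ) * (1 - ε)) :=
      mul_le_mul_of_nonneg_left (logb_le_lstar hx1) (le_of_lt hp0)
    unfold binEnt
    rw [hsplit] at h1
    nlinarith
  have hd : (0:ℝ) < 1 - δ := by linarith
  exact div_le_div_of_nonneg_right hmain hd.le |>.trans_eq rfl
end

section
/- For every integer M ≥ 2, the sum \sum_{n=0}^{∞} (1 - (1-2^{-n})^{M-1}) is at most ⌊log₂(M-1)⌋ + 1 + 2^{log₂(M-1) - ⌊log₂(M-1)⌋}, i.e., the exact i.i.d.-ensemble expected blocklength is bounded by the union-bound expression with a = 2. -/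
theorem stmt12 (M : ℕ) (hM : 2 ≤ M) (m : ℝ) (hm : m = Real.logb 2 ((M : ℝ) - 1)) :
    ∑' n : ℕ, (1 - (1 - ((2:ℝ)⁻¹) ^ n) ^ (M - 1))
      ≤ (⌊m⌋ : ℝ) + 1 + (2:ℝ) ^ (m - (⌊m⌋ : ℝ)) := by
  set f : ℕ → ℝ := fun n => 1 - (1 - ((2:ℝ)⁻¹) ^ n) ^ (M - 1) with hf
  have hM1 : (1:ℝ) ≤ (M:ℝ) - 1 := by
    have : (2:ℝ) ≤ (M:ℝ) := by exact_mod_cast hM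
    linarith
  have hm0 : 0 ≤ m := hm ▸ Real.logb_nonneg (by norm_num) hM1
  obtain ⟨k, hkm⟩ : ∃ k : ℕ, (⌊m⌋ : ℝ) = (k : ℝ) :=
    ⟨⌊m⌋.toNat, by exact_mod_cast (Int.toNat_of_nonneg (Int.floor_nonneg.mpr hm0)).symm⟩
  have hx : ∀ n : ℕ, (0:ℝ) ≤ ((2:ℝ)⁻¹)^n ∧ ((2:ℝ)⁻¹)^n ≤ 1 := by
    intro n
    constructor
    · positivity
    · exact pow_le_one₀ (by norm_num) (by norm_num)
  have hf0 : ∀ n, 0 ≤ f n := by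
    intro n
    have h := hx n
    have : (1 - ((2:ℝ)⁻¹)^n) ^ (M-1) ≤ 1 :=
      pow_le_one₀ (by linarith [h.2]) (by linarith [h.1])
    simp only [hf]; linarith
  have hf1 : ∀ n, f n ≤ 1 := by
    intro n
    have h := hx n
    have : (0:ℝ) ≤ (1 - ((2:ℝ)⁻¹)^n) ^ (M-1) := pow_nonneg (by linarith [h.2]) _
    simp only [hf]; linarith
  have hfB : ∀ n, f n ≤ ((M:ℝ) - 1) * ((2:ℝ)⁻¹)^n := by
    intro n
    have h := hx n
    have hb : (-2:ℝ) ≤ -(((2:ℝ)⁻¹)^n) := by linarith [h.2]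
    have := one_add_mul_le_pow hb (M - 1)
    have hcast : ((M - 1 : ℕ) : ℝ) = (M:ℝ) - 1 := by
      have : (1:ℕ) ≤ M := by omega
      push_cast [this]; ring
    rw [hcast, mul_neg, ← sub_eq_add_neg, ← sub_eq_add_neg] at this
    simp only [hf]
    linarith
  have hg : Summable (fun n : ℕ => ((M:ℝ) - 1) * ((2:ℝ)⁻¹)^n) :=
    (summable_geometric_of_lt_one (by norm_num) (by norm_num)).mul_left _
  have hfs : Summable f := Summable.of_nonneg_of_le hf0 hfB hg
  -- split
  have hsplit := Summable.sum_add_tsum_nat_add (f := f) (k + 1) hfs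
  -- bound head
  have hhead : ∑ i ∈ Finset.range (k+1), f i ≤ (k:ℝ) + 1 := by
    calc ∑ i ∈ Finset.range (k+1), f i ≤ ∑ i ∈ Finset.range (k+1), (1:ℝ) :=
          Finset.sum_le_sum fun i _ => hf1 i
      _ = (k:ℝ) + 1 := by simp
  -- bound tail
  have h2m : (2:ℝ) ^ m = (M:ℝ) - 1 := by
    rw [hm]; exact Real.rpow_logb (by norm_num) (by norm_num) (by linarith)
  have htailg : ∑' i : ℕ, ((M:ℝ) - 1) * ((2:ℝ)⁻¹)^(i + (k+1)) = ((M:ℝ)-1) * ((2:ℝ)⁻¹)^k := by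
    have : ∀ i : ℕ, ((M:ℝ) - 1) * ((2:ℝ)⁻¹)^(i + (k+1))
        = (((M:ℝ) - 1) * ((2:ℝ)⁻¹)^(k+1)) * ((2:ℝ)⁻¹)^i := by
      intro i; rw [pow_add]; ring
    rw [tsum_congr this, tsum_mul_left, tsum_geometric_of_lt_one (by norm_num) (by norm_num)]
    rw [pow_succ]
    norm_num
    ring
  have htail : ∑' i : ℕ, f (i + (k+1)) ≤ ((M:ℝ)-1) * ((2:ℝ)⁻¹)^k := by
    rw [← htailg]
    have hfs' : Summable fun i : ℕ => f (i + (k+1)) :=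
      (summable_nat_add_iff (f := f) (k+1)).mpr hfs
    have hg' : Summable fun i : ℕ => ((M:ℝ) - 1) * ((2:ℝ)⁻¹)^(i + (k+1)) :=
      (summable_nat_add_iff (f := fun n : ℕ => ((M:ℝ) - 1) * ((2:ℝ)⁻¹)^n) (k+1)).mpr hg
    exact Summable.tsum_le_tsum (fun i => hfB _) hfs' hg'
  have hfin : ((M:ℝ)-1) * ((2:ℝ)⁻¹)^k = (2:ℝ) ^ (m - (⌊m⌋ : ℝ)) := by
    rw [hkm, Real.rpow_sub (by norm_num), h2m, Real.rpow_natCast]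
    rw [inv_pow]
    field_simp
  calc ∑' n : ℕ, f n = ∑ i ∈ Finset.range (k+1), f i + ∑' i : ℕ, f (i + (k+1)) := hsplit.symm
    _ ≤ ((k:ℝ) + 1) + ((M:ℝ)-1) * ((2:ℝ)⁻¹)^k := add_le_add hhead htail
    _ = (⌊m⌋ : ℝ) + 1 + (2:ℝ) ^ (m - (⌊m⌋ : ℝ)) := by rw [hfin, hkm]
end
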